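/- Let Â, B̂ be in SL(2,ℝ) with tr(Â)·tr(B̂)·tr(ÂB̂) < 0. Regarding Â, B̂ as elements of SL(2,ℂ), set A = Φ*(Â), B = Φ*(B̂) and C = (BA)⁻¹; the traces tr(A), tr(B), tr(C) are real. Then σ₊(A,B,C) = σ₋(A,B,C) = tr(A) + tr(B) + tr(C) + 1 + 2·√((tr(A)+1)(tr(B)+1)(tr(C)+1)), where √ denotes the nonnegative real square root. -/

import Mathlib

open Matrix

/-- The irreducible representation of `SL(2,ℂ)` on `ℂ³` at the level of matrices. -/
noncomputable def PhiStar (M : Matrix (Fin 2) (Fin 2) ℂ) : Matrix (Fin 3) (Fin 3) ℂ :=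
  !![(M 0 0) ^ 2, -(Real.sqrt 2 : ℂ) * M 0 0 * M 0 1, -(M 0 1) ^ 2;
     -(Real.sqrt 2 : ℂ) * M 0 0 * M 1 0, M 0 0 * M 1 1 + M 0 1 * M 1 0,
       (Real.sqrt 2 : ℂ) * M 0 1 * M 1 1;
     -(M 1 0) ^ 2, (Real.sqrt 2 : ℂ) * M 1 0 * M 1 1, (M 1 1) ^ 2]

/-! `PhiStar` is multiplicative, so it commutes with inverses, and
`tr Φ*(M) = tr(M)² - det M`. For a `2 × 2` matrix of determinant one, Cayley–Hamilton gives
`M⁻¹ = tr(M) • 1 - M`, hence `tr(M⁻¹N) = tr M tr N - tr(MN)`. With `x = tr Â`, `y = tr B̂`,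
`z = tr ÂB̂` this makes both shape invariants equal to `x² + y² + z² - 2xyz - 2`, while
`tr A = x² - 1`, `tr B = y² - 1`, `tr C = z² - 1`; the square root is `√((xyz)²) = |xyz| = -xyz`
by the sign hypothesis. -/

lemma Complex.ofReal_sqrt_two_sq : ((Real.sqrt 2 : ℝ) : ℂ) ^ 2 = 2 := by
  rw [← Complex.ofReal_pow, Real.sq_sqrt zero_le_two, Complex.ofReal_ofNat]

lemma phiStar_mul (M N : Matrix (Fin 2) (Fin 2) ℂ) :
    PhiStar (M * N) = PhiStar M * PhiStar N := by
  ext i j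
  fin_cases i <;> fin_cases j <;>
    simp [PhiStar, Matrix.mul_apply, Fin.sum_univ_succ] <;>
    ring_nf <;> simp only [Complex.ofReal_sqrt_two_sq]

lemma phiStar_one : PhiStar 1 = 1 := by
  ext i j
  fin_cases i <;> fin_cases j <;> simp [PhiStar]

lemma phiStar_inv {M : Matrix (Fin 2) (Fin 2) ℂ} (hM : IsUnit M.det) :
    (PhiStar M)⁻¹ = PhiStar M⁻¹ :=
  inv_eq_right_inv (by rw [← phiStar_mul, mul_nonsing_inv M hM, phiStar_one])

lemma trace_phiStar (M : Matrix (Fin 2) (Fin 2) ℂ) :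
    (PhiStar M).trace = M.trace ^ 2 - M.det := by
  simp [PhiStar, Matrix.trace, det_fin_two, Fin.sum_univ_succ]
  ring

section FinTwo

variable {R : Type*} [CommRing R]

lemma Matrix.adjugate_fin_two_eq_trace_smul_one_sub (M : Matrix (Fin 2) (Fin 2) R) :
    adjugate M = M.trace • 1 - M := by
  rw [adjugate_fin_two, trace_fin_two]
  ext i j
  fin_cases i <;> fin_cases j <;> simp

lemma Matrix.inv_fin_two_of_det_eq_one {M : Matrix (Fin 2) (Fin 2) R} (hM : M.det = 1) :
    M⁻¹ = M.trace • 1 - M := by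
  rw [inv_def, hM, Ring.inverse_one, one_smul, adjugate_fin_two_eq_trace_smul_one_sub]

lemma Matrix.trace_inv_fin_two_of_det_eq_one {M : Matrix (Fin 2) (Fin 2) R} (hM : M.det = 1) :
    M⁻¹.trace = M.trace := by
  rw [inv_fin_two_of_det_eq_one hM, trace_sub, trace_smul, trace_one, Fintype.card_fin,
    smul_eq_mul]
  ring

lemma Matrix.trace_inv_mul_fin_two_of_det_eq_one {M : Matrix (Fin 2) (Fin 2) R}
    (hM : M.det = 1) (N : Matrix (Fin 2) (Fin 2) R) :
    (M⁻¹ * N).trace = M.trace * N.trace - (M * N).trace := by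
  rw [inv_fin_two_of_det_eq_one hM, sub_mul, smul_mul_assoc, one_mul, trace_sub, trace_smul,
    smul_eq_mul]

end FinTwo

lemma trace_inv_phiStar {M : Matrix (Fin 2) (Fin 2) ℂ} (hM : M.det = 1) :
    (PhiStar M)⁻¹.trace = M.trace ^ 2 - 1 := by
  rw [phiStar_inv (by simp [hM]), trace_phiStar, trace_inv_fin_two_of_det_eq_one hM,
    det_nonsing_inv, hM, Ring.inverse_one]

/-- `shapeInvariant A B` is `σ₊(A, B, (BA)⁻¹)` and `shapeInvariant B A` is `σ₋(A, B, (BA)⁻¹)`. -/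
noncomputable def shapeInvariant {n K : Type*} [Fintype n] [DecidableEq n] [Field K]
    (A B : Matrix n n K) : K :=
  (A⁻¹ * B).trace - A⁻¹.trace * B.trace

lemma shapeInvariant_phiStar {M N : Matrix (Fin 2) (Fin 2) ℂ} (hM : M.det = 1)
    (hN : N.det = 1) :
    shapeInvariant (PhiStar M) (PhiStar N) =
      M.trace ^ 2 + N.trace ^ 2 + (M * N).trace ^ 2
        - 2 * M.trace * N.trace * (M * N).trace - 2 := by
  rw [shapeInvariant, phiStar_inv (by simp [hM]), ← phiStar_mul, trace_phiStar, trace_phiStar,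
    trace_phiStar, trace_inv_mul_fin_two_of_det_eq_one hM, trace_inv_fin_two_of_det_eq_one hM,
    det_mul, det_nonsing_inv, hM, hN, Ring.inverse_one]
  ring

lemma det_map_ofReal {n : Type*} [Fintype n] [DecidableEq n] (P : Matrix n n ℝ) :
    (P.map ((↑) : ℝ → ℂ)).det = P.det :=
  (Complex.ofRealHom.map_det P).symm

lemma trace_map_ofReal {n : Type*} [Fintype n] (P : Matrix n n ℝ) :
    (P.map ((↑) : ℝ → ℂ)).trace = P.trace :=
  (AddMonoidHom.map_trace Complex.ofRealHom P).symm

lemma map_ofReal_mul {n : Type*} [Fintype n] (P Q : Matrix n n ℝ) :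
    (P * Q).map ((↑) : ℝ → ℂ) = P.map (↑) * Q.map (↑) :=
  Matrix.map_mul (f := Complex.ofRealHom)

section OfReal

variable {P Q : Matrix (Fin 2) (Fin 2) ℝ}

lemma det_map_ofReal_eq_one (hP : P.det = 1) : (P.map ((↑) : ℝ → ℂ)).det = 1 := by
  rw [det_map_ofReal, hP, Complex.ofReal_one]

lemma trace_phiStar_map_ofReal (hP : P.det = 1) :
    (PhiStar (P.map (↑))).trace = ((P.trace ^ 2 - 1 : ℝ) : ℂ) := by
  rw [trace_phiStar, det_map_ofReal_eq_one hP, trace_map_ofReal]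
  push_cast
  rfl

lemma trace_inv_phiStar_map_ofReal (hP : P.det = 1) :
    (PhiStar (P.map (↑)))⁻¹.trace = ((P.trace ^ 2 - 1 : ℝ) : ℂ) := by
  rw [trace_inv_phiStar (det_map_ofReal_eq_one hP), trace_map_ofReal]
  push_cast
  rfl

lemma shapeInvariant_phiStar_map_ofReal (hP : P.det = 1) (hQ : Q.det = 1) :
    shapeInvariant (PhiStar (P.map (↑))) (PhiStar (Q.map (↑))) =
      ((P.trace ^ 2 + Q.trace ^ 2 + (P * Q).trace ^ 2
        - 2 * P.trace * Q.trace * (P * Q).trace - 2 : ℝ) : ℂ) := by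
  rw [shapeInvariant_phiStar (det_map_ofReal_eq_one hP) (det_map_ofReal_eq_one hQ),
    ← map_ofReal_mul, trace_map_ofReal, trace_map_ofReal, trace_map_ofReal]
  push_cast
  rfl

end OfReal

theorem shape_invariant_of_fuchsian_pants
    (Ah Bh : Matrix (Fin 2) (Fin 2) ℝ) (hA : Ah.det = 1) (hB : Bh.det = 1)
    (htr : Ah.trace * Bh.trace * (Ah * Bh).trace < 0) :
    (let A := PhiStar (Ah.map Complex.ofReal);
     let B := PhiStar (Bh.map Complex.ofReal);
     let C := (B * A)⁻¹;
     let σp := (A⁻¹ * B).trace - (A⁻¹).trace * B.trace;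
     let σm := (B⁻¹ * A).trace - (B⁻¹).trace * A.trace;
     A.trace.im = 0 ∧ B.trace.im = 0 ∧ C.trace.im = 0 ∧
     σp = σm ∧
     σp = A.trace + B.trace + C.trace + 1 +
       2 * (Real.sqrt ((A.trace.re + 1) * (B.trace.re + 1) * (C.trace.re + 1)) : ℂ)) := by
  intro A B C σp σm
  have hBA : (Bh * Ah).det = 1 := by rw [det_mul, hA, hB, one_mul]
  have hA_tr : A.trace = ((Ah.trace ^ 2 - 1 : ℝ) : ℂ) := trace_phiStar_map_ofReal hA
  have hB_tr : B.trace = ((Bh.trace ^ 2 - 1 : ℝ) : ℂ) := trace_phiStar_map_ofReal hB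
  have hC_tr : C.trace = (((Ah * Bh).trace ^ 2 - 1 : ℝ) : ℂ) := by
    rw [show C = (PhiStar ((Bh * Ah).map (↑)))⁻¹ by rw [map_ofReal_mul, phiStar_mul],
      trace_inv_phiStar_map_ofReal hBA, trace_mul_comm]
  have hσp : σp = _ := shapeInvariant_phiStar_map_ofReal hA hB
  have hσm : σm = σp := by
    rw [show σm = _ from shapeInvariant_phiStar_map_ofReal hB hA, hσp, trace_mul_comm Bh]
    ring_nf
  have hsqrt : √((Ah.trace ^ 2 - 1 + 1) * (Bh.trace ^ 2 - 1 + 1) * ((Ah * Bh).trace ^ 2 - 1 + 1))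
      = -(Ah.trace * Bh.trace * (Ah * Bh).trace) := by
    rw [← abs_of_neg htr, ← Real.sqrt_sq_eq_abs]
    congr 1
    ring
  refine ⟨by rw [hA_tr, Complex.ofReal_im], by rw [hB_tr, Complex.ofReal_im],
    by rw [hC_tr, Complex.ofReal_im], hσm.symm, ?_⟩
  rw [hσp, hA_tr, hB_tr, hC_tr, Complex.ofReal_re, Complex.ofReal_re, Complex.ofReal_re, hsqrt]
  push_cast
  ring
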